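/- arXiv:2602.15059 — 3 statements merged into one kernel-verified Lean document; each statement's English description precedes it below -/
import Mathlib

section
/- Let H be a real inner product space, ν > 0, Δt > 0 and θ ∈ [1/2, 1]. Let A : H →ₗ[ℝ] H satisfy ⟪A v, v⟫ ≥ 0 for all v (viscous coercivity), let B : H → H satisfy ⟪B v, v⟫ = 0 for all v (discrete skew-symmetry), and let C : H → H satisfy ⟪C v, v⟫ ≥ 0 for all v (closure dissipativity). Suppose u, u⁺ ∈ H satisfy the certified θ-scheme step (1/Δt)·(u⁺ − u) + ν·A uθ + B uθ + C uθ = f with uθ := θ·u⁺ + (1−θ)·u and f ∈ H. Then the discrete energy inequality holds: (1/2)‖u⁺‖² − (1/2)‖u‖² + ν·Δt·⟪A uθ, uθ⟫ + Δt·⟪C uθ, uθ⟫ ≤ Δt·⟪f, uθ⟫. (ROM energy stability, per-step form.) -/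
open RealInnerProductSpace

section ThetaScheme

variable {H : Type*} [NormedAddCommGroup H] [InnerProductSpace ℝ H]

/-- The numerical dissipation of the θ-scheme is the term `(θ - 1/2) ‖x - y‖²`. -/
theorem inner_sub_smul_add_one_sub_smul (θ : ℝ) (x y : H) :
    ⟪x - y, θ • x + (1 - θ) • y⟫ =
      (1 / 2) * ‖x‖ ^ 2 - (1 / 2) * ‖y‖ ^ 2 + (θ - 1 / 2) * ‖x - y‖ ^ 2 := by
  rw [← real_inner_self_eq_norm_sq (x - y), ← real_inner_self_eq_norm_sq x,
    ← real_inner_self_eq_norm_sq y]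
  simp only [inner_sub_left, inner_sub_right, inner_add_right, real_inner_smul_right,
    real_inner_comm x y]
  ring

theorem half_norm_sq_sub_half_norm_sq_le_inner {θ : ℝ} (hθ : 1 / 2 ≤ θ) (x y : H) :
    (1 / 2) * ‖x‖ ^ 2 - (1 / 2) * ‖y‖ ^ 2 ≤ ⟪x - y, θ • x + (1 - θ) • y⟫ := by
  rw [inner_sub_smul_add_one_sub_smul]
  have : 0 ≤ (θ - 1 / 2) * ‖x - y‖ ^ 2 := mul_nonneg (by linarith) (sq_nonneg _)
  linarith

theorem inner_step_eq_of_skew {ν Δt : ℝ} (hΔt : Δt ≠ 0) {A B C : H → H}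
    (hB : ∀ v : H, ⟪B v, v⟫ = 0) {u uplus f w : H}
    (hstep : (1 / Δt) • (uplus - u) + ν • A w + B w + C w = f) :
    ⟪uplus - u, w⟫ + ν * Δt * ⟪A w, w⟫ + Δt * ⟪C w, w⟫ = Δt * ⟪f, w⟫ := by
  rw [← hstep]
  simp only [inner_add_left, real_inner_smul_left, hB w]
  field_simp
  ring

end ThetaScheme

theorem rom_energy_stability_step_general {H : Type*} [NormedAddCommGroup H]
    [InnerProductSpace ℝ H]
    (ν Δt θ : ℝ) (hΔt : 0 < Δt) (hθ₁ : 1 / 2 ≤ θ)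
    (A : H →ₗ[ℝ] H) (B C : H → H)
    (hB : ∀ v : H, ⟪B v, v⟫ = 0)
    (u uplus f uθ : H)
    (huθ : uθ = θ • uplus + (1 - θ) • u)
    (hstep : (1 / Δt) • (uplus - u) + ν • A uθ + B uθ + C uθ = f) :
    (1 / 2) * ‖uplus‖ ^ 2 - (1 / 2) * ‖u‖ ^ 2
      + ν * Δt * ⟪A uθ, uθ⟫ + Δt * ⟪C uθ, uθ⟫ ≤ Δt * ⟪f, uθ⟫ := by
  have henergy := inner_step_eq_of_skew hΔt.ne' hB hstep
  have hdiss := half_norm_sq_sub_half_norm_sq_le_inner hθ₁ uplus u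
  rw [← huθ] at hdiss
  linarith

/-- ROM energy stability, per-step form: one step of the certified θ-scheme with
viscous coercivity, skew-symmetric convection and dissipative closure satisfies the
discrete energy inequality. -/
theorem rom_energy_stability_step {H : Type*} [NormedAddCommGroup H]
    [InnerProductSpace ℝ H]
    (ν Δt θ : ℝ) (hν : 0 < ν) (hΔt : 0 < Δt) (hθ₁ : 1 / 2 ≤ θ) (hθ₂ : θ ≤ 1)
    (A : H →ₗ[ℝ] H) (B C : H → H)
    (hA : ∀ v : H, 0 ≤ ⟪A v, v⟫)
    (hB : ∀ v : H, ⟪B v, v⟫ = 0)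
    (hC : ∀ v : H, 0 ≤ ⟪C v, v⟫)
    (u uplus f uθ : H)
    (huθ : uθ = θ • uplus + (1 - θ) • u)
    (hstep : (1 / Δt) • (uplus - u) + ν • A uθ + B uθ + C uθ = f) :
    (1 / 2) * ‖uplus‖ ^ 2 - (1 / 2) * ‖u‖ ^ 2
      + ν * Δt * ⟪A uθ, uθ⟫ + Δt * ⟪C uθ, uθ⟫ ≤ Δt * ⟪f, uθ⟫ :=
  rom_energy_stability_step_general ν Δt θ hΔt hθ₁ A B C hB u uplus f uθ huθ hstep
end

section
/- Let ν > 0, L ≥ 0 and T > 0. Let E : ℝ → ℝ be differentiable on [0,T] with E(t) ≥ 0 for all t ∈ [0,T], and let d, r : ℝ → ℝ be continuous and nonnegative on [0,T]. Suppose the error-energy differential inequality holds for all t ∈ [0,T]: E'(t) + 2ν·d(t)² ≤ 2·r(t)·d(t) + 2L·√(E(t))·d(t). Then for every t ∈ [0,T]: E(t) + ν·∫₀ᵗ d(s)² ds ≤ exp(2L²·t/ν)·( E(0) + (2/ν)·∫₀ᵗ r(s)² ds ). (A posteriori error bound: the modeling error in the energy norm is controlled by the initial mismatch and the time-integrated squared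 residual, with a Grönwall factor explicit in ν, L and t.) -/
/-!
Young's inequality absorbs both terms on the right of the energy inequality into the
dissipation, leaving `G' ≤ K G + (2/ν) r²` for `G = E + ν ∫₀ᵗ d²` and `K = 2L²/ν`.
Then `e^{-Kt} G(t) - (2/ν) ∫₀ᵗ r²` is nonincreasing, since its derivative is at most
`(e^{-Kt} - 1) (2/ν) r² ≤ 0`; this is Grönwall's lemma with the weight `e^{-Ks} ≤ 1`
dropped from the forcing term.
-/

open Set Real intervalIntegral

section Primitive

variable {F : Type*} [NormedAddCommGroup F] [NormedSpace ℝ F] {f : ℝ → F} {a b : ℝ}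

theorem ContinuousOn.continuousOn_primitive_Icc (hf : ContinuousOn f (Icc a b)) :
    ContinuousOn (fun t => ∫ s in a..t, f s) (Icc a b) := by
  rcases le_or_gt a b with hab | hba
  · rw [← uIcc_of_le hab] at hf ⊢
    exact continuousOn_primitive_interval hf.integrableOn_Icc
  · simp [Icc_eq_empty_of_lt hba]

theorem ContinuousOn.hasDerivAt_primitive [CompleteSpace F] (hf : ContinuousOn f (Icc a b))
    {x : ℝ} (hx : x ∈ Ioo a b) : HasDerivAt (fun t => ∫ s in a..t, f s) (f x) x :=
  integral_hasDerivAt_right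
    ((hf.mono (Icc_subset_Icc_right hx.2.le)).intervalIntegrable_of_Icc hx.1.le)
    ((hf.mono Ioo_subset_Icc_self).stronglyMeasurableAtFilter isOpen_Ioo x hx)
    (hf.continuousAt (Icc_mem_nhds hx.1 hx.2))

end Primitive

theorem two_mul_le_mul_sq_add_div_mul_sq {ν : ℝ} (hν : 0 < ν) (x y : ℝ) :
    2 * x * y ≤ ν / 2 * y ^ 2 + 2 / ν * x ^ 2 := by
  have hsq : ν / 2 * y ^ 2 + 2 / ν * x ^ 2 - 2 * x * y = (2 * x - ν * y) ^ 2 / (2 * ν) := by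
    field_simp
    ring
  have : 0 ≤ (2 * x - ν * y) ^ 2 / (2 * ν) := by positivity
  linarith

theorem add_mul_sq_le_of_energy_inequality {ν L e e' d r : ℝ} (hν : 0 < ν) (he : 0 ≤ e)
    (h : e' + 2 * ν * d ^ 2 ≤ 2 * r * d + 2 * L * √e * d) :
    e' + ν * d ^ 2 ≤ 2 * L ^ 2 / ν * e + 2 / ν * r ^ 2 := by
  have hr := two_mul_le_mul_sq_add_div_mul_sq hν r d
  have hE := two_mul_le_mul_sq_add_div_mul_sq hν (L * √e) d
  rw [mul_pow, sq_sqrt he] at hE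
  have : 2 / ν * (L ^ 2 * e) = 2 * L ^ 2 / ν * e := by ring
  linarith

theorem le_exp_mul_add_integral_of_hasDerivAt_le {f f' g : ℝ → ℝ} {K a b : ℝ} (hK : 0 ≤ K)
    (hf : ContinuousOn f (Icc a b)) (hf' : ∀ x ∈ Ioo a b, HasDerivAt f (f' x) x)
    (hg : ContinuousOn g (Icc a b)) (hg₀ : ∀ x ∈ Ioo a b, 0 ≤ g x)
    (hbound : ∀ x ∈ Ioo a b, f' x ≤ K * f x + g x) :
    ∀ t ∈ Icc a b, f t ≤ exp (K * (t - a)) * (f a + ∫ s in a..t, g s) := by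
  set ψ : ℝ → ℝ := fun t => exp (-(K * (t - a))) * f t - ∫ s in a..t, g s
  have hψ_cont : ContinuousOn ψ (Icc a b) :=
    ((Continuous.continuousOn (by fun_prop)).mul hf).sub hg.continuousOn_primitive_Icc
  have hψ_deriv : ∀ x ∈ Ioo a b,
      HasDerivAt ψ (exp (-(K * (x - a))) * (f' x - K * f x) - g x) x := by
    intro x hx
    have hexp :
        HasDerivAt (fun t => exp (-(K * (t - a)))) (exp (-(K * (x - a))) * -K) x := by
      simpa using (((hasDerivAt_id x).sub_const a).const_mul K).neg.exp
    exact ((hexp.mul (hf' x hx)).sub (hg.hasDerivAt_primitive hx)).congr_deriv (by ring)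
  have hψ_deriv_nonpos :
      ∀ x ∈ Ioo a b, exp (-(K * (x - a))) * (f' x - K * f x) - g x ≤ 0 := by
    intro x hx
    have hweight : exp (-(K * (x - a))) ≤ 1 :=
      exp_le_one_iff.2 (neg_nonpos.2 (mul_nonneg hK (sub_nonneg.2 hx.1.le)))
    calc exp (-(K * (x - a))) * (f' x - K * f x) - g x
        ≤ exp (-(K * (x - a))) * g x - g x := by
          gcongr
          linarith [hbound x hx]
      _ ≤ 0 := sub_nonpos.2 (mul_le_of_le_one_left (hg₀ x hx) hweight)
  have hψ_anti : AntitoneOn ψ (Icc a b) :=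
    antitoneOn_of_hasDerivWithinAt_nonpos (convex_Icc a b) hψ_cont
      (f' := fun x => exp (-(K * (x - a))) * (f' x - K * f x) - g x)
      (by rw [interior_Icc]; exact fun x hx => (hψ_deriv x hx).hasDerivWithinAt)
      (by rw [interior_Icc]; exact hψ_deriv_nonpos)
  intro t ht
  have hψt : exp (-(K * (t - a))) * f t - ∫ s in a..t, g s ≤ f a := by
    simpa [ψ] using hψ_anti (left_mem_Icc.2 (ht.1.trans ht.2)) ht ht.1
  calc f t = exp (K * (t - a)) * (exp (-(K * (t - a))) * f t) := by
        rw [← mul_assoc, ← exp_add, add_neg_cancel, exp_zero, one_mul]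
    _ ≤ exp (K * (t - a)) * (f a + ∫ s in a..t, g s) := by
        gcongr
        linarith

theorem a_posteriori_error_bound_general
    (ν L T : ℝ) (hν : 0 < ν)
    (E E' d r : ℝ → ℝ)
    (hE : ∀ t ∈ Set.Icc (0 : ℝ) T, HasDerivAt E (E' t) t)
    (hEnn : ∀ t ∈ Set.Icc (0 : ℝ) T, 0 ≤ E t)
    (hd : ContinuousOn d (Set.Icc (0 : ℝ) T))
    (hr : ContinuousOn r (Set.Icc (0 : ℝ) T))
    (hineq : ∀ t ∈ Set.Icc (0 : ℝ) T,
      E' t + 2 * ν * (d t) ^ 2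
        ≤ 2 * (r t) * (d t) + 2 * L * Real.sqrt (E t) * (d t)) :
    ∀ t ∈ Set.Icc (0 : ℝ) T,
      E t + ν * ∫ s in (0 : ℝ)..t, (d s) ^ 2
        ≤ Real.exp (2 * L ^ 2 * t / ν)
          * (E 0 + (2 / ν) * ∫ s in (0 : ℝ)..t, (r s) ^ 2) := by
  set G : ℝ → ℝ := fun t => E t + ν * ∫ s in (0 : ℝ)..t, d s ^ 2
  have hG_cont : ContinuousOn G (Icc 0 T) :=
    (HasDerivAt.continuousOn hE).add
      (continuousOn_const.mul (hd.pow 2).continuousOn_primitive_Icc)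
  have hG_deriv : ∀ x ∈ Ioo 0 T, HasDerivAt G (E' x + ν * d x ^ 2) x := fun x hx =>
    (hE x (Ioo_subset_Icc_self hx)).add (((hd.pow 2).hasDerivAt_primitive hx).const_mul ν)
  have hG_bound : ∀ x ∈ Ioo 0 T,
      E' x + ν * d x ^ 2 ≤ 2 * L ^ 2 / ν * G x + 2 / ν * r x ^ 2 := by
    intro x hx
    have hx' := Ioo_subset_Icc_self hx
    have hdiss : 0 ≤ ∫ s in (0 : ℝ)..x, d s ^ 2 :=
      integral_nonneg hx.1.le fun _ _ => sq_nonneg _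
    calc E' x + ν * d x ^ 2 ≤ 2 * L ^ 2 / ν * E x + 2 / ν * r x ^ 2 :=
          add_mul_sq_le_of_energy_inequality hν (hEnn x hx') (hineq x hx')
      _ ≤ 2 * L ^ 2 / ν * G x + 2 / ν * r x ^ 2 := by
          gcongr
          exact le_add_of_nonneg_right (mul_nonneg hν.le hdiss)
  intro t ht
  have hgronwall := le_exp_mul_add_integral_of_hasDerivAt_le (g := fun x => 2 / ν * r x ^ 2)
    (by positivity) hG_cont hG_deriv (continuousOn_const.mul (hr.pow 2))
    (fun x _ => by positivity) hG_bound t ht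
  simpa [G, integral_const_mul, div_mul_eq_mul_div] using hgronwall

/-- A posteriori error bound: the error-energy differential inequality, obtained from
the tested error equation via skew-symmetry of convection and dissipativity of the
closure, implies control of the error in the energy norm by the initial mismatch and
the time-integrated squared residual, with an explicit Grönwall factor. -/
theorem a_posteriori_error_bound
    (ν L T : ℝ) (hν : 0 < ν) (hL : 0 ≤ L) (hT : 0 < T)
    (E E' d r : ℝ → ℝ)
    (hE : ∀ t ∈ Set.Icc (0 : ℝ) T, HasDerivAt E (E' t) t)
    (hEnn : ∀ t ∈ Set.Icc (0 : ℝ) T, 0 ≤ E t)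
    (hd : ContinuousOn d (Set.Icc (0 : ℝ) T))
    (hdnn : ∀ t ∈ Set.Icc (0 : ℝ) T, 0 ≤ d t)
    (hr : ContinuousOn r (Set.Icc (0 : ℝ) T))
    (hrnn : ∀ t ∈ Set.Icc (0 : ℝ) T, 0 ≤ r t)
    (hineq : ∀ t ∈ Set.Icc (0 : ℝ) T,
      E' t + 2 * ν * (d t) ^ 2
        ≤ 2 * (r t) * (d t) + 2 * L * Real.sqrt (E t) * (d t)) :
    ∀ t ∈ Set.Icc (0 : ℝ) T,
      E t + ν * ∫ s in (0 : ℝ)..t, (d s) ^ 2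
        ≤ Real.exp (2 * L ^ 2 * t / ν)
          * (E 0 + (2 / ν) * ∫ s in (0 : ℝ)..t, (r s) ^ 2) :=
  a_posteriori_error_bound_general ν L T hν E E' d r hE hEnn hd hr hineq
end

section
/- Let V be a real inner product space, let a : V → V → ℝ be a symmetric bilinear form, let ρ > 0, Δt > 0 and F ∈ ℝ. Suppose η, η⁺, w, w⁺ ∈ V satisfy the implicit elastodynamics step: η⁺ = η + Δt·w⁺ and ρ·⟪w⁺ − w, w⁺⟫ + Δt·a(η⁺, w⁺) = Δt·F. Then the discrete structure energy identity holds: (ρ/2)‖w⁺‖² + (1/2)·a(η⁺, η⁺) − (ρ/2)‖w‖² − (1/2)·a(η, η) + (ρ/2)‖w⁺ − w‖² + (1/2)·a(η⁺ − η, η⁺ − η) = Δt·F. In particular, if a is positive semidefinite then the structure energy (ρ/2)‖w⁺‖² + (1/2)a(η⁺,η⁺) increases by at most Δt·F. (Structure-step energy identity in the discrete coupled FSI energy estimate.) -/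
/-!
For a symmetric bilinear form `B` one has the polarization identity
`2 B(x, x - y) = B(x, x) - B(y, y) + B(x - y, x - y)`.
Applied to the inner product with `(x, y) = (w⁺, w)`, and to `a` with `(x, y) = (η⁺, η)` after
writing `Δt w⁺ = η⁺ - η`, it turns the step into the energy identity; dropping the two
nonnegative numerical-dissipation terms gives the energy inequality.
-/

open RealInnerProductSpace

theorem LinearMap.two_mul_apply_sub_eq_of_symm {R M : Type*} [CommRing R] [AddCommGroup M]
    [Module R M] (B : M →ₗ[R] M →ₗ[R] R) (hB : ∀ x y : M, B x y = B y x) (x y : M) :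
    2 * B x (x - y) = B x x - B y y + B (x - y) (x - y) := by
  simp only [map_sub, LinearMap.sub_apply]
  rw [hB y x]
  ring

theorem two_mul_real_inner_self_sub {V : Type*} [NormedAddCommGroup V]
    [InnerProductSpace ℝ V] (u v : V) :
    2 * ⟪u, u - v⟫ = ‖u‖ ^ 2 - ‖v‖ ^ 2 + ‖u - v‖ ^ 2 := by
  simpa only [innerₗ_apply_apply, real_inner_self_eq_norm_sq] using
    (innerₗ V).two_mul_apply_sub_eq_of_symm (fun x y => real_inner_comm y x) u v

theorem fsi_structure_energy_identity_general {V : Type*} [NormedAddCommGroup V]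
    [InnerProductSpace ℝ V]
    (a : V →ₗ[ℝ] V →ₗ[ℝ] ℝ) (hsymm : ∀ x y : V, a x y = a y x)
    (ρ Δt F : ℝ) (hρ : 0 < ρ)
    (η ηplus w wplus : V)
    (hkin : ηplus = η + Δt • wplus)
    (hstep : ρ * ⟪wplus - w, wplus⟫ + Δt * a ηplus wplus = Δt * F) :
    ((ρ / 2) * ‖wplus‖ ^ 2 + (1 / 2) * a ηplus ηplus
        - (ρ / 2) * ‖w‖ ^ 2 - (1 / 2) * a η η
        + (ρ / 2) * ‖wplus - w‖ ^ 2 + (1 / 2) * a (ηplus - η) (ηplus - η) = Δt * F)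
    ∧ ((∀ v : V, 0 ≤ a v v) →
        (ρ / 2) * ‖wplus‖ ^ 2 + (1 / 2) * a ηplus ηplus
          ≤ (ρ / 2) * ‖w‖ ^ 2 + (1 / 2) * a η η + Δt * F) := by
  have hdisp : ηplus - η = Δt • wplus := by rw [hkin, add_sub_cancel_left]
  have hkinetic := two_mul_real_inner_self_sub wplus w
  have helastic := a.two_mul_apply_sub_eq_of_symm hsymm ηplus η
  have hwork : Δt * a ηplus wplus = a ηplus (ηplus - η) := by
    rw [hdisp, map_smul, smul_eq_mul]
  rw [real_inner_comm, hwork] at hstep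
  have hidentity : (ρ / 2) * ‖wplus‖ ^ 2 + (1 / 2) * a ηplus ηplus
      - (ρ / 2) * ‖w‖ ^ 2 - (1 / 2) * a η η
      + (ρ / 2) * ‖wplus - w‖ ^ 2 + (1 / 2) * a (ηplus - η) (ηplus - η) = Δt * F := by
    linear_combination hstep - (ρ / 2) * hkinetic - (1 / 2 : ℝ) * helastic
  refine ⟨hidentity, fun ha_nonneg => ?_⟩
  have hstrain := ha_nonneg (ηplus - η)
  have hvel_jump : 0 ≤ (ρ / 2) * ‖wplus - w‖ ^ 2 := by positivity
  linarith

/-- Structure-step energy identity in the discrete coupled FSI energy estimate: the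
implicit elastodynamics step satisfies an exact discrete energy balance, and if the
elastic form is positive semidefinite the structure energy increases by at most
`Δt·F`. -/
theorem fsi_structure_energy_identity {V : Type*} [NormedAddCommGroup V]
    [InnerProductSpace ℝ V]
    (a : V →ₗ[ℝ] V →ₗ[ℝ] ℝ) (hsymm : ∀ x y : V, a x y = a y x)
    (ρ Δt F : ℝ) (hρ : 0 < ρ) (hΔt : 0 < Δt)
    (η ηplus w wplus : V)
    (hkin : ηplus = η + Δt • wplus)
    (hstep : ρ * ⟪wplus - w, wplus⟫ + Δt * a ηplus wplus = Δt * F) :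
    ((ρ / 2) * ‖wplus‖ ^ 2 + (1 / 2) * a ηplus ηplus
        - (ρ / 2) * ‖w‖ ^ 2 - (1 / 2) * a η η
        + (ρ / 2) * ‖wplus - w‖ ^ 2 + (1 / 2) * a (ηplus - η) (ηplus - η) = Δt * F)
    ∧ ((∀ v : V, 0 ≤ a v v) →
        (ρ / 2) * ‖wplus‖ ^ 2 + (1 / 2) * a ηplus ηplus
          ≤ (ρ / 2) * ‖w‖ ^ 2 + (1 / 2) * a η η + Δt * F) :=
  fsi_structure_energy_identity_general a hsymm ρ Δt F hρ η ηplus w wplus hkin hstep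
end
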